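/- Exactness of the semidefinite relaxation under the rank-one condition: suppose Z* ∈ ℝ^{(K+3)×(K+3)} is feasible for the SDP (i.e., Z* ⪰ 0, Z*_{K+3,K+3} = 1, Z*_{k+2,K+3} ≥ 0 for all k, the coupling equalities Z*_{k+2,k+2} = Z*_{1,1} + Z*_{2,2} − 2ã_kᵀ(Z*_{1,K+3}, Z*_{2,K+3}) + ‖ã_k‖₂² hold), Z* minimizes the SDP objective Σ_{k=1}^K w_k (r_k² − 2r_k Z_{k+2,K+3} + Z_{k+2,k+2}) over all feasible Z, and Z* = v̄v̄ᵀ for some v̄ ∈ ℝ^{K+3} with v̄_{K+3} = 1. Then X* = (Z*_{1,K+3}, Z*_{2,K+3}) is a global minimizer of the fixed-height R-LS cost: J_RLS(X*; z₀) ≤ J_RLS(x, y; z₀) for all (x, y) ∈ ℝ². -/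

import Mathlib

/-!
A feasible `Z* = v̄v̄ᵀ` with `v̄_{K+3} = 1` has `t_k² = ‖X* − ã_k‖²` by the coupling equality, and
`t_k ≥ 0` picks the root `t_k = ‖X* − ã_k‖`, so its SDP objective equals `J_RLS(X*)`. Conversely
every point `X` lifts to the feasible rank-one matrix built from `(X, ‖X − ã_k‖, 1)`, whose
objective is `J_RLS(X)`: the pairwise constraints are the triangle inequality between the
virtual anchors. Optimality of `Z*` then gives `J_RLS(X*) ≤ J_RLS(X)`.
-/

open Matrix

/-- Index type for the lifted SDP variable `Z ∈ ℝ^{(K+3)×(K+3)}`: the first two indices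
correspond to the target coordinates `(x, y)`, the middle `K` indices to the predicted
ranges `t₁, …, t_K`, and the final index to the homogenizing entry `1`. -/
abbrev Idx (K : ℕ) := Fin 2 ⊕ Fin K ⊕ Fin 1

/-- The last (homogenizing) index, corresponding to index `K+3` in 1-based notation. -/
def lastIdx (K : ℕ) : Idx K := Sum.inr (Sum.inr 0)

/-- The index `k+2` (1-based) corresponding to the predicted range `t_k`. -/
def tIdx {K : ℕ} (k : Fin K) : Idx K := Sum.inr (Sum.inl k)

variable {K : ℕ}

noncomputable section

def IsSDPFeasible (atil : Fin K → EuclideanSpace ℝ (Fin 2)) (Z : Matrix (Idx K) (Idx K) ℝ) :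
    Prop :=
  Z.PosSemidef ∧
    Z (lastIdx K) (lastIdx K) = 1 ∧
    (∀ k, 0 ≤ Z (tIdx k) (lastIdx K)) ∧
    (∀ k, Z (tIdx k) (tIdx k) =
      Z (Sum.inl 0) (Sum.inl 0) + Z (Sum.inl 1) (Sum.inl 1) -
        2 * (atil k 0 * Z (Sum.inl 0) (lastIdx K) +
             atil k 1 * Z (Sum.inl 1) (lastIdx K)) + ‖atil k‖ ^ 2) ∧
    (∀ k1 k2, k1 ≠ k2 →
      Z (tIdx k1) (tIdx k1) + Z (tIdx k2) (tIdx k2) - 2 * Z (tIdx k1) (tIdx k2) ≤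
        ‖atil k1 - atil k2‖ ^ 2 ∧
      ‖atil k1 - atil k2‖ ≤ Z (tIdx k1) (lastIdx K) + Z (tIdx k2) (lastIdx K))

def sdpObjective (r w : Fin K → ℝ) (Z : Matrix (Idx K) (Idx K) ℝ) : ℝ :=
  ∑ k, w k * ((r k) ^ 2 - 2 * r k * Z (tIdx k) (lastIdx K) + Z (tIdx k) (tIdx k))

def rlsCost (atil : Fin K → EuclideanSpace ℝ (Fin 2)) (r w : Fin K → ℝ)
    (X : EuclideanSpace ℝ (Fin 2)) : ℝ :=
  ∑ k, w k * (‖X - atil k‖ - r k) ^ 2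

def sdpPosition (Z : Matrix (Idx K) (Idx K) ℝ) : EuclideanSpace ℝ (Fin 2) :=
  (EuclideanSpace.equiv (Fin 2) ℝ).symm ![Z (Sum.inl 0) (lastIdx K), Z (Sum.inl 1) (lastIdx K)]

def rangeLift (atil : Fin K → EuclideanSpace ℝ (Fin 2)) (X : EuclideanSpace ℝ (Fin 2)) :
    Idx K → ℝ :=
  Sum.elim (fun i => X i) (Sum.elim (fun k => ‖X - atil k‖) fun _ => 1)

end

theorem EuclideanSpace.norm_sub_sq_fin_two (x a : EuclideanSpace ℝ (Fin 2)) :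
    ‖x - a‖ ^ 2 = x 0 ^ 2 + x 1 ^ 2 - 2 * (a 0 * x 0 + a 1 * x 1) + ‖a‖ ^ 2 := by
  rw [norm_sub_sq_real, EuclideanSpace.norm_sq_eq, EuclideanSpace.inner_eq_star_dotProduct]
  simp [Fin.sum_univ_two, dotProduct]

theorem Matrix.vecMulVec_self_apply_of_eq_one {n : Type*} {v : n → ℝ} {l : n} (hl : v l = 1)
    (i : n) : vecMulVec v v i l = v i := by
  simp [vecMulVec_apply, hl]

theorem Matrix.vecMulVec_self_apply_diag {n : Type*} {v : n → ℝ} {l : n} (hl : v l = 1)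
    (i : n) : vecMulVec v v i i = vecMulVec v v i l ^ 2 := by
  rw [vecMulVec_self_apply_of_eq_one hl, vecMulVec_apply, sq]

theorem isSDPFeasible_rangeLift (atil : Fin K → EuclideanSpace ℝ (Fin 2))
    (X : EuclideanSpace ℝ (Fin 2)) :
    IsSDPFeasible atil (vecMulVec (rangeLift atil X) (rangeLift atil X)) := by
  refine ⟨by simpa using posSemidef_vecMulVec_self_star (rangeLift atil X), ?_, fun k => ?_,
    fun k => ?_, fun k1 k2 _ => ⟨?_, ?_⟩⟩ <;>
    simp only [vecMulVec_apply, rangeLift, lastIdx, tIdx, Sum.elim_inl, Sum.elim_inr, mul_one]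
  · exact norm_nonneg _
  · rw [← sq, EuclideanSpace.norm_sub_sq_fin_two]
    ring
  · have h := abs_dist_sub_le (atil k1) (atil k2) X
    rw [dist_comm _ X, dist_comm _ X, dist_eq_norm, dist_eq_norm, dist_eq_norm] at h
    nlinarith [abs_le.mp h, norm_nonneg (atil k1 - atil k2)]
  · have h := dist_triangle (atil k1) X (atil k2)
    rwa [dist_comm _ X, dist_eq_norm, dist_eq_norm, dist_eq_norm] at h

theorem sdpObjective_rangeLift (atil : Fin K → EuclideanSpace ℝ (Fin 2)) (r w : Fin K → ℝ)
    (X : EuclideanSpace ℝ (Fin 2)) :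
    sdpObjective r w (vecMulVec (rangeLift atil X) (rangeLift atil X)) = rlsCost atil r w X := by
  refine Finset.sum_congr rfl fun k _ => ?_
  simp only [vecMulVec_apply, rangeLift, lastIdx, tIdx, Sum.elim_inr, Sum.elim_inl]
  ring

theorem IsSDPFeasible.apply_tIdx_eq_norm {atil : Fin K → EuclideanSpace ℝ (Fin 2)}
    {v : Idx K → ℝ} (hZ : IsSDPFeasible atil (vecMulVec v v)) (hv : v (lastIdx K) = 1)
    (k : Fin K) :
    vecMulVec v v (tIdx k) (lastIdx K) = ‖sdpPosition (vecMulVec v v) - atil k‖ := by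
  obtain ⟨-, -, hnonneg, hcoupling, -⟩ := hZ
  have hsq : vecMulVec v v (tIdx k) (lastIdx K) ^ 2 =
      ‖sdpPosition (vecMulVec v v) - atil k‖ ^ 2 := by
    rw [EuclideanSpace.norm_sub_sq_fin_two, ← vecMulVec_self_apply_diag hv, hcoupling,
      vecMulVec_self_apply_diag hv (Sum.inl 0), vecMulVec_self_apply_diag hv (Sum.inl 1)]
    rfl
  exact (pow_left_inj₀ (hnonneg k) (norm_nonneg _) two_ne_zero).mp hsq

theorem IsSDPFeasible.sdpObjective_eq_rlsCost {atil : Fin K → EuclideanSpace ℝ (Fin 2)}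
    {v : Idx K → ℝ} (hZ : IsSDPFeasible atil (vecMulVec v v)) (hv : v (lastIdx K) = 1)
    (r w : Fin K → ℝ) :
    sdpObjective r w (vecMulVec v v) = rlsCost atil r w (sdpPosition (vecMulVec v v)) := by
  refine Finset.sum_congr rfl fun k _ => ?_
  rw [vecMulVec_self_apply_diag hv, hZ.apply_tIdx_eq_norm hv]
  ring

theorem rlsCost_sdpPosition_le {atil : Fin K → EuclideanSpace ℝ (Fin 2)} {r w : Fin K → ℝ}
    {v : Idx K → ℝ} (hZ : IsSDPFeasible atil (vecMulVec v v)) (hv : v (lastIdx K) = 1)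
    (hopt : ∀ Z, IsSDPFeasible atil Z → sdpObjective r w (vecMulVec v v) ≤ sdpObjective r w Z)
    (X : EuclideanSpace ℝ (Fin 2)) :
    rlsCost atil r w (sdpPosition (vecMulVec v v)) ≤ rlsCost atil r w X :=
  calc rlsCost atil r w (sdpPosition (vecMulVec v v))
      = sdpObjective r w (vecMulVec v v) := (hZ.sdpObjective_eq_rlsCost hv r w).symm
    _ ≤ sdpObjective r w (vecMulVec (rangeLift atil X) (rangeLift atil X)) :=
        hopt _ (isSDPFeasible_rangeLift atil X)
    _ = rlsCost atil r w X := sdpObjective_rangeLift atil r w X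

theorem stmt16_general (K : ℕ) (atil : Fin K → EuclideanSpace ℝ (Fin 2))
    (r w : Fin K → ℝ)
    (J : EuclideanSpace ℝ (Fin 2) → ℝ)
    (hJ : ∀ X, J X = ∑ k, w k * (‖X - atil k‖ - r k) ^ 2)
    (Obj : Matrix (Idx K) (Idx K) ℝ → ℝ)
    (hObj : ∀ Z, Obj Z = ∑ k, w k *
      ((r k) ^ 2 - 2 * r k * Z (tIdx k) (lastIdx K) + Z (tIdx k) (tIdx k)))
    (Feas : Matrix (Idx K) (Idx K) ℝ → Prop)
    (hFeas : ∀ Z, Feas Z ↔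
      Z.PosSemidef ∧
      Z (lastIdx K) (lastIdx K) = 1 ∧
      (∀ k, 0 ≤ Z (tIdx k) (lastIdx K)) ∧
      (∀ k, Z (tIdx k) (tIdx k) =
        Z (Sum.inl 0) (Sum.inl 0) + Z (Sum.inl 1) (Sum.inl 1) -
          2 * (atil k 0 * Z (Sum.inl 0) (lastIdx K) +
               atil k 1 * Z (Sum.inl 1) (lastIdx K)) + ‖atil k‖ ^ 2) ∧
      (∀ k1 k2, k1 ≠ k2 →
        Z (tIdx k1) (tIdx k1) + Z (tIdx k2) (tIdx k2) - 2 * Z (tIdx k1) (tIdx k2) ≤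
          ‖atil k1 - atil k2‖ ^ 2 ∧
        ‖atil k1 - atil k2‖ ≤ Z (tIdx k1) (lastIdx K) + Z (tIdx k2) (lastIdx K)))
    (Zstar : Matrix (Idx K) (Idx K) ℝ)
    (hZfeas : Feas Zstar)
    (hZopt : ∀ Z, Feas Z → Obj Zstar ≤ Obj Z)
    (vbar : Idx K → ℝ)
    (hrank1 : Zstar = vecMulVec vbar vbar)
    (hvlast : vbar (lastIdx K) = 1) :
    ∀ X : EuclideanSpace ℝ (Fin 2),
      J ((EuclideanSpace.equiv (Fin 2) ℝ).symm
          ![Zstar (Sum.inl 0) (lastIdx K), Zstar (Sum.inl 1) (lastIdx K)]) ≤ J X := by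
  obtain rfl : J = rlsCost atil r w := funext hJ
  obtain rfl : Obj = sdpObjective r w := funext hObj
  obtain rfl : Feas = IsSDPFeasible atil := funext fun Z => propext (hFeas Z)
  subst hrank1
  exact rlsCost_sdpPosition_le hZfeas hvlast hZopt

/-- Exactness of the semidefinite relaxation under the rank-one condition: if `Z*` is
feasible for the SDP, minimizes the SDP objective over all feasible `Z`, and is rank one,
`Z* = v̄v̄ᵀ` with the last entry of `v̄` equal to `1`, then `X* = (Z*_{1,K+3}, Z*_{2,K+3})`
globally minimizes the fixed-height R-LS cost `J_RLS(·; z₀)`. -/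
theorem stmt16 (K : ℕ) (atil : Fin K → EuclideanSpace ℝ (Fin 2))
    (r w : Fin K → ℝ) (hw : ∀ k, 0 < w k)
    (J : EuclideanSpace ℝ (Fin 2) → ℝ)
    (hJ : ∀ X, J X = ∑ k, w k * (‖X - atil k‖ - r k) ^ 2)
    (Obj : Matrix (Idx K) (Idx K) ℝ → ℝ)
    (hObj : ∀ Z, Obj Z = ∑ k, w k *
      ((r k) ^ 2 - 2 * r k * Z (tIdx k) (lastIdx K) + Z (tIdx k) (tIdx k)))
    (Feas : Matrix (Idx K) (Idx K) ℝ → Prop)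
    (hFeas : ∀ Z, Feas Z ↔
      Z.PosSemidef ∧
      Z (lastIdx K) (lastIdx K) = 1 ∧
      (∀ k, 0 ≤ Z (tIdx k) (lastIdx K)) ∧
      (∀ k, Z (tIdx k) (tIdx k) =
        Z (Sum.inl 0) (Sum.inl 0) + Z (Sum.inl 1) (Sum.inl 1) -
          2 * (atil k 0 * Z (Sum.inl 0) (lastIdx K) +
               atil k 1 * Z (Sum.inl 1) (lastIdx K)) + ‖atil k‖ ^ 2) ∧
      (∀ k1 k2, k1 ≠ k2 →
        Z (tIdx k1) (tIdx k1) + Z (tIdx k2) (tIdx k2) - 2 * Z (tIdx k1) (tIdx k2) ≤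
          ‖atil k1 - atil k2‖ ^ 2 ∧
        ‖atil k1 - atil k2‖ ≤ Z (tIdx k1) (lastIdx K) + Z (tIdx k2) (lastIdx K)))
    (Zstar : Matrix (Idx K) (Idx K) ℝ)
    (hZfeas : Feas Zstar)
    (hZopt : ∀ Z, Feas Z → Obj Zstar ≤ Obj Z)
    (vbar : Idx K → ℝ)
    (hrank1 : Zstar = vecMulVec vbar vbar)
    (hvlast : vbar (lastIdx K) = 1) :
    ∀ X : EuclideanSpace ℝ (Fin 2),
      J ((EuclideanSpace.equiv (Fin 2) ℝ).symm
          ![Zstar (Sum.inl 0) (lastIdx K), Zstar (Sum.inl 1) (lastIdx K)]) ≤ J X :=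
  stmt16_general K atil r w J hJ Obj hObj Feas hFeas Zstar hZfeas hZopt vbar hrank1 hvlast
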